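/- arXiv:1808.02519 — 5 statements merged into one kernel-verified Lean document; each statement's English description precedes it below -/
import Mathlib

section
/- Let S be a w-orthogonal collection in a triangulated category D such that the extension closure ⟨S⟩ is functorially finite in D. Then for each 0 ≤ k ≤ w, the subcategory ⟨S⟩ * Σ^{-1}⟨S⟩ * ⋯ * Σ^{-k}⟨S⟩ is functorially finite in D. -/
/-!
If `f : x₀ ⟶ d` is a right `X`-approximation with cone `d ⟶ z`, and `g : y₀ ⟶ z` is a right
`Y`-approximation, then the homotopy pullback `e` of `d ⟶ z ⟵ y₀` is an extension of `y₀` by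
`x₀`, and `e ⟶ d` is a right `X * Y`-approximation: a map `s ⟶ d` from an extension
`x ⟶ s ⟶ y` is lifted on `x` through `f`, then on `y` through `g`, and the two lifts are glued
in `e`. Dually for left approximations. Shifts, being equivalences, preserve both kinds of
approximations, so `⟨S⟩ * Σ⁻¹⟨S⟩ * ⋯ * Σ^{-j}⟨S⟩` is functorially finite by induction on `j`.
-/

open CategoryTheory CategoryTheory.Limits CategoryTheory.Pretriangulated

universe v u u₂

namespace SMSPaper

/-- Serre duality data on a `k`-linear category, encoded by trace maps. -/
structure SerreData (k : Type u₂) [Field k] (D : Type u) [Category.{v} D] [Preadditive D]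
    [Linear k D] where
  F : D ⥤ D
  isEquiv : F.IsEquivalence
  tr : (x : D) → (x ⟶ F.obj x) →ₗ[k] k
  comm : ∀ {x y : D} (f : x ⟶ y) (g : y ⟶ F.obj x), tr x (f ≫ g) = tr y (g ≫ F.map f)
  nondeg₁ : ∀ {x y : D} (f : x ⟶ y), (∀ g : y ⟶ F.obj x, tr x (f ≫ g) = 0) → f = 0
  nondeg₂ : ∀ {x y : D} (g : y ⟶ F.obj x), (∀ f : x ⟶ y, tr x (f ≫ g) = 0) → g = 0

variable {C : Type u} [Category.{v} C] [Preadditive C] [HasZeroObject C]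
  [HasShift C ℤ] [∀ n : ℤ, (shiftFunctor C n).Additive] [Pretriangulated C]

/-- `f : x ⟶ d` is a right `X`-approximation of `d`. -/
def IsRightApprox (X : Set C) {x d : C} (f : x ⟶ d) : Prop :=
  x ∈ X ∧ ∀ s ∈ X, ∀ g : s ⟶ d, ∃ h : s ⟶ x, h ≫ f = g

/-- `f : d ⟶ x` is a left `X`-approximation of `d`. -/
def IsLeftApprox (X : Set C) {d x : C} (f : d ⟶ x) : Prop :=
  x ∈ X ∧ ∀ s ∈ X, ∀ g : d ⟶ s, ∃ h : x ⟶ s, f ≫ h = g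

def RightMinimal {x d : C} (f : x ⟶ d) : Prop :=
  ∀ g : x ⟶ x, g ≫ f = f → IsIso g

def LeftMinimal {d x : C} (f : d ⟶ x) : Prop :=
  ∀ g : x ⟶ x, f ≫ g = f → IsIso g

def IsMinimalRightApprox (X : Set C) {x d : C} (f : x ⟶ d) : Prop :=
  IsRightApprox X f ∧ RightMinimal f

def IsMinimalLeftApprox (X : Set C) {d x : C} (f : d ⟶ x) : Prop :=
  IsLeftApprox X f ∧ LeftMinimal f

def ContravariantlyFinite (X : Set C) : Prop :=
  ∀ d : C, ∃ (x : C) (f : x ⟶ d), IsRightApprox X f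

def CovariantlyFinite (X : Set C) : Prop :=
  ∀ d : C, ∃ (x : C) (f : d ⟶ x), IsLeftApprox X f

def FunctoriallyFinite (X : Set C) : Prop :=
  ContravariantlyFinite X ∧ CovariantlyFinite X

/-- `X * Y`: objects arising as extensions of an object of `Y` by an object of `X`. -/
def extStar (X Y : Set C) : Set C :=
  {d | ∃ (x y : C) (f : x ⟶ d) (g : d ⟶ y) (h : y ⟶ x⟦(1 : ℤ)⟧),
    (Triangle.mk f g h ∈ distTriang C) ∧ x ∈ X ∧ y ∈ Y}

def ExtClosed (X : Set C) : Prop := extStar X X ⊆ X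

/-- extension closure: smallest extension-closed subcategory containing `X`. -/
def extClosure (X : Set C) : Set C := ⋂₀ {T : Set C | X ⊆ T ∧ ExtClosed T}

/-- closure under direct summands. -/
def sumClosure (X : Set C) : Set C :=
  {d | ∃ x ∈ X, ∃ (i : d ⟶ x) (r : x ⟶ d), i ≫ r = 𝟙 d}

/-- `Sn S n` is `(S)_{n+1}` of the paper: `(S)_1 = S`, `(S)_{n+1} = (S * (S)_n)^⊕`. -/
def Sn (S : Set C) : ℕ → Set C
  | 0 => S
  | n + 1 => sumClosure (extStar S (Sn S n))

def shiftSet (i : ℤ) (S : Set C) : Set C :=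
  {d | ∃ s ∈ S, Nonempty (d ≅ s⟦i⟧)}

/-- `S ∪ Σ⁻¹S ∪ ⋯ ∪ Σ^{1-w}S`. -/
def shiftUnion (w : ℕ) (S : Set C) : Set C :=
  {d | ∃ i : ℕ, i < w ∧ d ∈ shiftSet (-(i : ℤ)) S}

/-- `starChain S n = ⟨S⟩ * Σ⁻¹⟨S⟩ * ⋯ * Σ^{-n}⟨S⟩`. -/
def starChain (S : Set C) : ℕ → Set C
  | 0 => extClosure S
  | n + 1 => extStar (starChain S n) (shiftSet (-((n : ℤ) + 1)) (extClosure S))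

def rightPerp (S : Set C) : Set C := {d | ∀ s ∈ S, ∀ f : s ⟶ d, f = 0}

def leftPerp (S : Set C) : Set C := {d | ∀ s ∈ S, ∀ f : d ⟶ s, f = 0}

/-- `S^{⊥_w} = {d : Hom(Σ^i S, d) = 0 for 0 ≤ i ≤ w}`. -/
def perpW (w : ℕ) (S : Set C) : Set C :=
  {d | ∀ i : ℕ, i ≤ w → ∀ s ∈ S, ∀ f : s⟦(i : ℤ)⟧ ⟶ d, f = 0}

/-- `^{⊥_w}S = {d : Hom(d, Σ^{-i} S) = 0 for 0 ≤ i ≤ w}`. -/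
def wPerp (w : ℕ) (S : Set C) : Set C :=
  {d | ∀ i : ℕ, i ≤ w → ∀ s ∈ S, ∀ f : d ⟶ s⟦(-(i : ℤ))⟧, f = 0}

def Indec (x : C) : Prop :=
  ¬ IsZero x ∧ ∀ e : x ⟶ x, e ≫ e = e → e = 0 ∨ e = 𝟙 x

/-- `(X, Y)` is an `S`-mutation pair. -/
def IsMutationPair (S X Y : Set C) : Prop :=
  X = leftPerp S ∩ rightPerp S ∩ leftPerp (shiftSet (-1) S) ∩
      shiftSet (-1) (extStar (extClosure S) Y) ∧
  Y = leftPerp S ∩ rightPerp S ∩ rightPerp (shiftSet 1 S) ∩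
      shiftSet 1 (extStar X (extClosure S))

/-- `r` is the right mutation of `d` with respect to `S`. -/
def IsRightMutation (S : Set C) (d r : C) : Prop :=
  ∃ (s : C) (α : s ⟶ d⟦(1 : ℤ)⟧) (β : d⟦(1 : ℤ)⟧ ⟶ r) (γ : r ⟶ s⟦(1 : ℤ)⟧),
    (Triangle.mk α β γ ∈ distTriang C) ∧ IsMinimalRightApprox (extClosure S) α

/-- `l` is the left mutation of `d` with respect to `S`. -/
def IsLeftMutation (S : Set C) (d l : C) : Prop :=
  ∃ (s : C) (β : l ⟶ d⟦(-1 : ℤ)⟧) (α : d⟦(-1 : ℤ)⟧ ⟶ s) (γ : s ⟶ l⟦(1 : ℤ)⟧),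
    (Triangle.mk β α γ ∈ distTriang C) ∧ IsMinimalLeftApprox (extClosure S) α

/-- the extension closure of `R` computed inside the triangulated category `Z`,
whose triangles `x → z → y → x⟨1⟩` come from a cone `c` of `x → z` in `D` together
with a minimal right `⟨S⟩`-approximation triangle `s → c → y → Σs`. -/
inductive zExtClosure (S Z R : Set C) : C → Prop
  | of (r : C) (hr : r ∈ R) : zExtClosure S Z R r
  | ext (x z y c s : C) (f : x ⟶ z) (g₁ : z ⟶ c) (h₁ : c ⟶ x⟦(1 : ℤ)⟧)
      (α : s ⟶ c) (β : c ⟶ y) (γ : y ⟶ s⟦(1 : ℤ)⟧)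
      (hT : Triangle.mk f g₁ h₁ ∈ distTriang C)
      (hT' : Triangle.mk α β γ ∈ distTriang C)
      (hmin : IsMinimalRightApprox (extClosure S) α)
      (hz : z ∈ Z)
      (hx : zExtClosure S Z R x) (hy : zExtClosure S Z R y) :
      zExtClosure S Z R z

variable (k : Type u₂) [Field k] [Linear k C]

/-- orthogonal collection: `dim Hom(x, y) = δ_{x,y}`. -/
def IsOrthogonalCollection (S : Set C) : Prop :=
  (∀ x ∈ S, Module.finrank k (x ⟶ x) = 1) ∧
  ∀ x ∈ S, ∀ y ∈ S, x ≠ y → ∀ f : x ⟶ y, f = 0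

/-- `w`-orthogonal collection. -/
def IsWOrthogonal (w : ℕ) (S : Set C) : Prop :=
  IsOrthogonalCollection k S ∧
  ∀ i : ℕ, 1 ≤ i → i ≤ w - 1 → ∀ x ∈ S, ∀ y ∈ S, ∀ f : x⟦(i : ℤ)⟧ ⟶ y, f = 0

/-- `w`-simple-minded system. -/
def IsWSMS (w : ℕ) (S : Set C) : Prop :=
  IsWOrthogonal k w S ∧ ∀ d : C, d ∈ sumClosure (extClosure (shiftUnion w S))

def IsRightRiedtmann (w : ℕ) (S : Set C) : Prop :=
  IsWOrthogonal k w S ∧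
  ∀ d : C, (∀ i : ℕ, i < w → ∀ s ∈ S, ∀ f : d⟦(i : ℤ)⟧ ⟶ s, f = 0) → IsZero d

def IsLeftRiedtmann (w : ℕ) (S : Set C) : Prop :=
  IsWOrthogonal k w S ∧
  ∀ d : C, (∀ i : ℕ, i < w → ∀ s ∈ S, ∀ f : s⟦(i : ℤ)⟧ ⟶ d, f = 0) → IsZero d

/-- `S` is an `𝕊_w`-subcategory (`𝕊_w = 𝕊 Σ^{-w}`). -/
def IsSwSubcat (SD : SerreData k C) (w : ℤ) (S : Set C) : Prop :=
  ∀ x : C, x ∈ S ↔ ∃ s ∈ S, Nonempty (x ≅ SD.F.obj (s⟦-w⟧))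

/-- the universal map `z → 𝕊z`, corresponding to the trace functional on `End(z)`. -/
def IsUniversalMap (SD : SerreData k C) (z : C) (h : z ⟶ SD.F.obj z) : Prop :=
  SD.tr z h = 1 ∧ ∀ f : z ⟶ z, ¬ IsIso f → SD.tr z (f ≫ h) = 0

open Category

lemma contravariantlyFinite_image_of_adjunction {A B : Type u} [Category.{v} A] [Category.{v} B]
    {F : A ⥤ B} {G : B ⥤ A} (adj : F ⊣ G) {X : Set A} (hX : ContravariantlyFinite X) :
    ContravariantlyFinite {d : B | ∃ s ∈ X, Nonempty (d ≅ F.obj s)} := by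
  intro d
  obtain ⟨x, f, hx, hf⟩ := hX (G.obj d)
  refine ⟨F.obj x, (adj.homEquiv x d).symm f, ⟨x, hx, ⟨Iso.refl _⟩⟩, ?_⟩
  rintro t ⟨s, hs, ⟨e⟩⟩ g
  obtain ⟨h, hh⟩ := hf s hs (adj.homEquiv s d (e.inv ≫ g))
  refine ⟨e.hom ≫ F.map h, ?_⟩
  rw [assoc, ← adj.homEquiv_naturality_left_symm, hh, Equiv.symm_apply_apply,
    e.hom_inv_id_assoc]

lemma covariantlyFinite_image_of_adjunction {A B : Type u} [Category.{v} A] [Category.{v} B]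
    {F : A ⥤ B} {G : B ⥤ A} (adj : G ⊣ F) {X : Set A} (hX : CovariantlyFinite X) :
    CovariantlyFinite {d : B | ∃ s ∈ X, Nonempty (d ≅ F.obj s)} := by
  intro d
  obtain ⟨x, f, hx, hf⟩ := hX (G.obj d)
  refine ⟨F.obj x, adj.homEquiv d x f, ⟨x, hx, ⟨Iso.refl _⟩⟩, ?_⟩
  rintro t ⟨s, hs, ⟨e⟩⟩ g
  obtain ⟨h, hh⟩ := hf s hs ((adj.homEquiv d s).symm (g ≫ e.hom))
  refine ⟨F.map h ≫ e.inv, ?_⟩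
  rw [← assoc, ← adj.homEquiv_naturality_right, hh, Equiv.apply_symm_apply, assoc, e.hom_inv_id,
    comp_id]

lemma extStar_contravariantlyFinite {X Y : Set C} (hX : ContravariantlyFinite X)
    (hY : ContravariantlyFinite Y) : ContravariantlyFinite (extStar X Y) := by
  intro d
  obtain ⟨x₀, f, hx₀, hf⟩ := hX d
  obtain ⟨z, p, δ, hT⟩ := distinguished_cocone_triangle f
  obtain ⟨y₀, g, hy₀, hg⟩ := hY z
  obtain ⟨e, i, q, hE⟩ := distinguished_cocone_triangle₂ (g ≫ δ)
  obtain ⟨m, hm₁, hm₂⟩ : ∃ m : e ⟶ d, i ≫ m = 𝟙 x₀ ≫ f ∧ q ≫ g = m ≫ p :=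
    complete_distinguished_triangle_morphism₂ _ _ hE hT (𝟙 x₀) g
      (show (g ≫ δ) ≫ (𝟙 x₀)⟦(1 : ℤ)⟧' = g ≫ δ by simp)
  rw [id_comp] at hm₁
  refine ⟨e, m, ⟨x₀, y₀, i, q, g ≫ δ, hE, hx₀, hy₀⟩, ?_⟩
  rintro s ⟨x, y, a, b, c, hS, hx, hy⟩ φ
  have hfp : f ≫ p = 0 := comp_distTriang_mor_zero₁₂ _ hT
  have hpδ : p ≫ δ = 0 := comp_distTriang_mor_zero₂₃ _ hT
  obtain ⟨u, hu⟩ := hf x hx (a ≫ φ)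
  obtain ⟨ψ, hψ⟩ : ∃ ψ : y ⟶ z, φ ≫ p = b ≫ ψ :=
    Triangle.yoneda_exact₂ _ hS (φ ≫ p)
      (show a ≫ φ ≫ p = 0 by simp [← reassoc_of% hu, hfp])
  obtain ⟨v, hv⟩ := hg y hy ψ
  obtain ⟨χ, hχ⟩ : ∃ χ : s ⟶ e, b ≫ v = χ ≫ q :=
    Triangle.coyoneda_exact₃ _ hE (b ≫ v)
      (show (b ≫ v) ≫ g ≫ δ = 0 by simp [reassoc_of% hv, ← reassoc_of% hψ, hpδ])
  obtain ⟨r, hr⟩ : ∃ r : s ⟶ x₀, χ ≫ m - φ = r ≫ f :=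
    Triangle.coyoneda_exact₂ _ hT (χ ≫ m - φ)
      (show (χ ≫ m - φ) ≫ p = 0 by simp [← hm₂, ← reassoc_of% hχ, hv, hψ])
  exact ⟨χ - r ≫ i, by simp [hm₁, ← hr]⟩

-- `hφ` says that `φ` kills `T.invRotate.mor₁` (up to sign), written in `simp`-normal form.
lemma Triangle.yoneda_exact₁ {T : Triangle C} (hT : T ∈ distTriang C) {A : C}
    (φ : T.obj₁ ⟶ A)
    (hφ : T.mor₃⟦(-1 : ℤ)⟧' ≫
      (shiftFunctorCompIsoId C (1 : ℤ) (-1) (add_neg_cancel 1)).hom.app T.obj₁ ≫ φ = 0) :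
    ∃ χ : T.obj₂ ⟶ A, φ = T.mor₁ ≫ χ :=
  Triangle.yoneda_exact₂ _ (inv_rot_of_distTriang _ hT) φ <| by
    show (-(T.mor₃⟦(-1 : ℤ)⟧' ≫
      (shiftFunctorCompIsoId C (1 : ℤ) (-1) (add_neg_cancel 1)).hom.app T.obj₁)) ≫ φ = 0
    rw [Preadditive.neg_comp, assoc, hφ, neg_zero]

lemma Triangle.shift_mor₃_comp_mor₁_eq_zero {T : Triangle C} (hT : T ∈ distTriang C) :
    T.mor₃⟦(-1 : ℤ)⟧' ≫
      (shiftFunctorCompIsoId C (1 : ℤ) (-1) (add_neg_cancel 1)).hom.app T.obj₁ ≫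
        T.mor₁ = 0 := by
  have h := comp_distTriang_mor_zero₁₂ _ (inv_rot_of_distTriang _ hT)
  change (-(T.mor₃⟦(-1 : ℤ)⟧' ≫
    (shiftFunctorCompIsoId C (1 : ℤ) (-1) (add_neg_cancel 1)).hom.app T.obj₁)) ≫
      T.mor₁ = 0 at h
  rwa [Preadditive.neg_comp, neg_eq_zero, assoc] at h

lemma extStar_covariantlyFinite {X Y : Set C} (hX : CovariantlyFinite X)
    (hY : CovariantlyFinite Y) : CovariantlyFinite (extStar X Y) := by
  intro d
  obtain ⟨y₀, g, hy₀, hg⟩ := hY d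
  obtain ⟨z, p, δ, hT⟩ := distinguished_cocone_triangle₁ g
  obtain ⟨x₀, f, hx₀, hf⟩ := hX z
  obtain ⟨e, i, q, hE⟩ := distinguished_cocone_triangle₂ (δ ≫ f⟦(1 : ℤ)⟧')
  obtain ⟨m, hm₁, hm₂⟩ : ∃ m : d ⟶ e, p ≫ m = f ≫ i ∧ g ≫ 𝟙 y₀ = m ≫ q :=
    complete_distinguished_triangle_morphism₂ _ _ hT hE f (𝟙 y₀) (id_comp _).symm
  rw [comp_id] at hm₂
  refine ⟨e, m, ⟨x₀, y₀, i, q, _, hE, hx₀, hy₀⟩, ?_⟩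
  rintro s ⟨x, y, a, b, c, hS, hx, hy⟩ φ
  have hpg : p ≫ g = 0 := comp_distTriang_mor_zero₁₂ _ hT
  have hδp : δ⟦(-1 : ℤ)⟧' ≫
      (shiftFunctorCompIsoId C (1 : ℤ) (-1) (add_neg_cancel 1)).hom.app z ≫ p = 0 :=
    Triangle.shift_mor₃_comp_mor₁_eq_zero hT
  obtain ⟨v, hv⟩ := hg y hy (φ ≫ b)
  obtain ⟨ψ, hψ⟩ : ∃ ψ : z ⟶ x, p ≫ φ = ψ ≫ a :=
    Triangle.coyoneda_exact₂ _ hS (p ≫ φ)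
      (show (p ≫ φ) ≫ b = 0 by simp [← hv, reassoc_of% hpg])
  obtain ⟨u, hu⟩ := hf x hx ψ
  obtain ⟨χ, hχ⟩ : ∃ χ : e ⟶ s, u ≫ a = i ≫ χ :=
    Triangle.yoneda_exact₁ hE (u ≫ a)
      (show (δ ≫ f⟦(1 : ℤ)⟧')⟦(-1 : ℤ)⟧' ≫
          (shiftFunctorCompIsoId C (1 : ℤ) (-1) (add_neg_cancel 1)).hom.app x₀ ≫
            u ≫ a = 0 by
        simp [shift_shift_neg', reassoc_of% hu, ← hψ, reassoc_of% hδp])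
  obtain ⟨r, hr⟩ : ∃ r : y₀ ⟶ s, m ≫ χ - φ = g ≫ r :=
    Triangle.yoneda_exact₂ _ hT (m ≫ χ - φ)
      (show p ≫ (m ≫ χ - φ) = 0 by simp [reassoc_of% hm₁, ← hχ, reassoc_of% hu, hψ])
  exact ⟨χ - q ≫ r, by
    rw [Preadditive.comp_sub, ← reassoc_of% hm₂, ← hr, sub_sub_cancel]⟩

theorem stmt8_general (S : Set C)
    (hff : FunctoriallyFinite (extClosure S)) (j : ℕ) :
    FunctoriallyFinite (starChain S j) := by
  induction j with
  | zero => exact hff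
  | succ n ih =>
    exact ⟨extStar_contravariantlyFinite ih.1
        (contravariantlyFinite_image_of_adjunction (shiftEquiv C _).toAdjunction hff.1),
      extStar_covariantlyFinite ih.2
        (covariantlyFinite_image_of_adjunction (shiftEquiv C _).symm.toAdjunction hff.2)⟩

/-- If `⟨S⟩` is functorially finite for a `w`-orthogonal collection `S`, then so is
`⟨S⟩ * Σ⁻¹⟨S⟩ * ⋯ * Σ^{-j}⟨S⟩` for each `0 ≤ j ≤ w`. -/
theorem stmt8 (w : ℕ) (S : Set C) (hS : IsWOrthogonal k w S)
    (hff : FunctoriallyFinite (extClosure S)) (j : ℕ) (hj : j ≤ w) :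
    FunctoriallyFinite (starChain S j) :=
  stmt8_general S hff j

end SMSPaper
end

section
/- Let D be a triangulated category with Serre functor 𝕊, let z, w be objects, and suppose we have a composition z → 𝕊z → w where z → 𝕊z is the universal map (corresponding to the identity under Serre duality Hom(z, 𝕊z) ≅ D Hom(z, z)) and 𝕊z → w is not a split monomorphism. Then the composition z → w is zero. -/
open CategoryTheory CategoryTheory.Limits CategoryTheory.Pretriangulated

universe v u u₂

namespace SMSPaper

variable {C : Type u} [Category.{v} C] [Preadditive C] [HasZeroObject C]
  [HasShift C ℤ] [∀ n : ℤ, (shiftFunctor C n).Additive] [Pretriangulated C]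

variable (k : Type u₂) [Field k] [Linear k C]

/-- If `h : z → 𝕊z` is the universal map and `h' : 𝕊z → w` is not a split monomorphism,
then `h ≫ h' = 0`. -/
theorem stmt12 (SD : SerreData k C) {z w : C}
    (h : z ⟶ SD.F.obj z) (hh : IsUniversalMap k SD z h)
    (h' : SD.F.obj z ⟶ w) (hsplit : ¬ ∃ r : w ⟶ SD.F.obj z, h' ≫ r = 𝟙 (SD.F.obj z)) :
    h ≫ h' = 0 := by
  haveI := SD.isEquiv
  apply SD.nondeg₁
  intro g
  rw [Category.assoc]
  obtain ⟨f, hf⟩ : ∃ f : z ⟶ z, SD.F.map f = h' ≫ g :=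
    ⟨SD.F.preimage (h' ≫ g), SD.F.map_preimage _⟩
  have hni : ¬ IsIso f := by
    intro hi
    have hiso : IsIso (h' ≫ g) := hf ▸ (inferInstance : IsIso (SD.F.map f))
    exact hsplit ⟨g ≫ inv (h' ≫ g), by rw [← Category.assoc, IsIso.hom_inv_id]⟩
  calc SD.tr z (h ≫ (h' ≫ g)) = SD.tr z (h ≫ SD.F.map f) := by rw [hf]
    _ = SD.tr z (f ≫ h) := (SD.comm f h).symm
    _ = 0 := hh.2 f hni

end SMSPaper
end

section
/- Let (X, Y) be an S-mutation pair in a triangulated category D and let s → d → y → Σs be a distinguished triangle with s ∈ ⟨S⟩ and y ∈ Y. If f, g : y → y' are morphisms with y' ∈ Y such that (f − g) ∘ (d → y) = 0, then f = g. Dually, if σ, τ : s' → s with s' ∈ ⟨S⟩ satisfy (s → d) ∘ (σ − τ) = 0, then σ = τ. -/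
open CategoryTheory CategoryTheory.Limits CategoryTheory.Pretriangulated

universe v u u₂

namespace SMSPaper

variable {C : Type u} [Category.{v} C] [Preadditive C] [HasZeroObject C]
  [HasShift C ℤ] [∀ n : ℤ, (shiftFunctor C n).Additive] [Pretriangulated C]

variable (k : Type u₂) [Field k] [Linear k C]

/-- If `Hom(Σ s₀, y') = 0` for all `s₀ ∈ S`, then the same holds for all
`s₀` in the extension closure of `S`. -/
lemma hom_shift_extClosure_eq_zero (S : Set C) (y' : C)
    (h0 : ∀ s₀ ∈ S, ∀ f : s₀⟦(1 : ℤ)⟧ ⟶ y', f = 0) :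
    ∀ s₀ ∈ extClosure S, ∀ f : s₀⟦(1 : ℤ)⟧ ⟶ y', f = 0 := by
  set T : Set C := {s₀ | ∀ f : s₀⟦(1 : ℤ)⟧ ⟶ y', f = 0} with hTdef
  have hS : S ⊆ T := fun s₀ hs₀ => h0 s₀ hs₀
  have hclosed : ExtClosed T := by
    rintro d ⟨x, yy, f, g, h, hdist, hx, hyy⟩
    intro φ
    -- rotate the triangle three times to get `x⟦1⟧ ⟶ d⟦1⟧ ⟶ yy⟦1⟧ ⟶ x⟦2⟧`
    have h3 := rot_of_distTriang _ (rot_of_distTriang _ (rot_of_distTriang _ hdist))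
    have hx' : (shiftFunctor C (1 : ℤ)).map f ≫ φ = 0 :=
      (show x ∈ {s₀ : C | ∀ f : s₀⟦(1 : ℤ)⟧ ⟶ y', f = 0} from hx) _
    obtain ⟨g', hg'⟩ := Triangle.yoneda_exact₂ _ h3 φ (by
      erw [Preadditive.neg_comp, hx', neg_zero])
    have hyy' : g' = 0 :=
      (show yy ∈ {s₀ : C | ∀ f : s₀⟦(1 : ℤ)⟧ ⟶ y', f = 0} from hyy) g'
    rw [hg', hyy', comp_zero]
    rfl
  intro s₀ hs₀ f
  exact Set.sInter_subset_of_mem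
    (show T ∈ {T : Set C | S ⊆ T ∧ ExtClosed T} from ⟨hS, hclosed⟩) hs₀ f

/-- For an `S`-mutation pair `(X, Y)` and a triangle `s → d → y → Σs` with `s ∈ ⟨S⟩`
and `y ∈ Y`: maps out of `y` into `Y` are determined by their composite with `d → y`,
and maps of `⟨S⟩` into `s` are determined by their composite with `s → d`. -/
theorem stmt13 (S X Y : Set C) (hXY : IsMutationPair S X Y)
    {s d y : C} (α : s ⟶ d) (β : d ⟶ y) (γ : y ⟶ s⟦(1 : ℤ)⟧)
    (hT : Triangle.mk α β γ ∈ distTriang C) (hs : s ∈ extClosure S) (hy : y ∈ Y) :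
    (∀ y' ∈ Y, ∀ f g : y ⟶ y', β ≫ (f - g) = 0 → f = g) ∧
    (∀ s' ∈ extClosure S, ∀ σ τ : s' ⟶ s, (σ - τ) ≫ α = 0 → σ = τ) := by
  constructor
  · intro y' hy' f g hfg
    -- `f - g` factors through `γ : y ⟶ Σs`
    obtain ⟨h, hh⟩ := Triangle.yoneda_exact₃ _ hT (f - g) hfg
    -- `y' ∈ Y` kills maps out of shifts of `⟨S⟩`
    have hy'perp : y' ∈ rightPerp (shiftSet 1 S) := (hXY.2 ▸ hy').1.2
    have h0 : ∀ s₀ ∈ S, ∀ φ : s₀⟦(1 : ℤ)⟧ ⟶ y', φ = 0 := fun s₀ hs₀ φ =>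
      hy'perp _ ⟨s₀, hs₀, ⟨Iso.refl _⟩⟩ φ
    have : h = 0 := hom_shift_extClosure_eq_zero S y' h0 s hs h
    rw [this, comp_zero] at hh
    exact sub_eq_zero.mp hh
  · intro s' hs' σ τ hστ
    -- `σ - τ` factors through `y⟦-1⟧ ⟶ s` (inverse rotation)
    obtain ⟨h, hh⟩ := Triangle.coyoneda_exact₂ _ (inv_rot_of_distTriang _ hT) (σ - τ) hστ
    -- kill `h : s' ⟶ y⟦-1⟧` by shifting: `h⟦1⟧ ≫ (iso) : s'⟦1⟧ ⟶ y` is zero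
    have hyperp : y ∈ rightPerp (shiftSet 1 S) := (hXY.2 ▸ hy).1.2
    have h0 : ∀ s₀ ∈ S, ∀ φ : s₀⟦(1 : ℤ)⟧ ⟶ y, φ = 0 := fun s₀ hs₀ φ =>
      hyperp _ ⟨s₀, hs₀, ⟨Iso.refl _⟩⟩ φ
    have hz : h⟦(1 : ℤ)⟧' ≫ ((shiftEquiv C (1 : ℤ)).counitIso.hom.app y) = 0 :=
      hom_shift_extClosure_eq_zero S y h0 s' hs' _
    have hz' : h⟦(1 : ℤ)⟧' = 0 := by
      have := hz =≫ ((shiftEquiv C (1 : ℤ)).counitIso.inv.app y)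
      erw [Category.assoc, Iso.hom_inv_id_app, Category.comp_id, zero_comp] at this
      exact this
    have : h = 0 := (shiftFunctor C (1 : ℤ)).map_injective (by simpa using hz')
    rw [this, zero_comp] at hh
    exact sub_eq_zero.mp hh

end SMSPaper
end

section
/- Let S be an orthogonal collection in a triangulated category D such that ⟨S⟩ is functorially finite, and suppose either S is an 𝕊_{-1}-subcategory or Hom(ΣS, S) = 0. If (X, Y) is an S-mutation pair, then Y equals the class of right mutations of objects of X, X equals the class of left mutations of objects of Y, and there is an equivalence of categories G : X → Y. -/
/-!
For `x ∈ X` the definition of `X` provides a triangle `s → Σx → y → Σs` with `s ∈ ⟨S⟩` and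
`y ∈ Y`. Since both `y` and `Σ⁻¹y` lie in `⟨S⟩^⊥`, the map `s → Σx` is a minimal right
`⟨S⟩`-approximation, so `y` is the right mutation of `x`; minimal approximations, hence mutations,
are unique up to isomorphism. Rotating the triangle to `x → Σ⁻¹y → s → Σx` shows dually that `x` is
the left mutation of `y`, and starting from `y ∈ Y` gives the reverse inclusions. The same
vanishing of `Hom(⟨S⟩, Y)`, `Hom(⟨S⟩, Σ⁻¹Y)`, `Hom(X, ⟨S⟩)` and `Hom(ΣX, ⟨S⟩)` makes
`x ↦ y`, `f ↦` (the unique fill-in of `Σf`), a fully faithful functor `X ⥤ Y`; it is essentially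
surjective because `Y = R(X)`.
-/

open CategoryTheory CategoryTheory.Limits CategoryTheory.Pretriangulated

universe v u u₂

namespace SMSPaper

variable {C : Type u} [Category.{v} C] [Preadditive C] [HasZeroObject C]
  [HasShift C ℤ] [∀ n : ℤ, (shiftFunctor C n).Additive] [Pretriangulated C]

variable (k : Type u₂) [Field k] [Linear k C]

section Category

variable {D : Type*} [Category D]

lemma isIso_of_isIso_comp_of_isIso_comp {a b : D} {h : a ⟶ b} {h' : b ⟶ a}
    (hhh' : IsIso (h ≫ h')) (hh'h : IsIso (h' ≫ h)) : IsIso h := by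
  have : IsSplitEpi h := IsSplitEpi.mk' ⟨inv (h' ≫ h) ≫ h', by simp⟩
  have : Mono h := mono_of_mono h h'
  exact isIso_of_mono_of_isSplitEpi h

variable {T : Set D}

lemma IsMinimalRightApprox.exists_isIso_comp_eq {s s' a : D} {α : s ⟶ a} {α' : s' ⟶ a}
    (hα : IsMinimalRightApprox T α) (hα' : IsMinimalRightApprox T α') :
    ∃ h : s ⟶ s', IsIso h ∧ h ≫ α' = α := by
  obtain ⟨h, hh⟩ := hα'.1.2 s hα.1.1 α
  obtain ⟨h', hh'⟩ := hα.1.2 s' hα'.1.1 α'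
  exact ⟨h, isIso_of_isIso_comp_of_isIso_comp (hα.2 _ (by rw [Category.assoc, hh', hh]))
    (hα'.2 _ (by rw [Category.assoc, hh, hh'])), hh⟩

lemma IsMinimalLeftApprox.exists_isIso_comp_eq {b s s' : D} {α : b ⟶ s} {α' : b ⟶ s'}
    (hα : IsMinimalLeftApprox T α) (hα' : IsMinimalLeftApprox T α') :
    ∃ h : s ⟶ s', IsIso h ∧ α ≫ h = α' := by
  obtain ⟨h, hh⟩ := hα.1.2 s' hα'.1.1 α'
  obtain ⟨h', hh'⟩ := hα'.1.2 s hα.1.1 α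
  exact ⟨h, isIso_of_isIso_comp_of_isIso_comp (hα.2 _ (by rw [← Category.assoc, hh, hh']))
    (hα'.2 _ (by rw [← Category.assoc, hh', hh])), hh⟩

lemma mem_shiftSet_of_iso [HasShift D ℤ] {S : Set D} {n : ℤ} {a b : D} (e : a ≅ b)
    (hb : b ∈ shiftSet n S) : a ∈ shiftSet n S := by
  obtain ⟨s, hs, ⟨e'⟩⟩ := hb
  exact ⟨s, hs, ⟨e ≪≫ e'⟩⟩

end Category

section Preadditive

variable {D : Type*} [Category D] [Preadditive D] {S : Set D}

lemma mem_leftPerp_of_iso {a b : D} (e : a ≅ b) (hb : b ∈ leftPerp S) : a ∈ leftPerp S :=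
  fun s hs _ => (cancel_epi e.inv).1 ((hb s hs _).trans comp_zero.symm)

lemma mem_rightPerp_of_iso {a b : D} (e : a ≅ b) (hb : b ∈ rightPerp S) : a ∈ rightPerp S :=
  fun s hs _ => (cancel_mono e.hom).1 ((hb s hs _).trans zero_comp.symm)

variable [HasShift D ℤ]

lemma forall_shift_hom_eq_zero_iff (n : ℤ) (a b : D) :
    (∀ f : a⟦n⟧ ⟶ b, f = 0) ↔ ∀ g : a ⟶ b⟦-n⟧, g = 0 := by
  simp only [← subsingleton_iff_forall_eq (0 : _ ⟶ _)]
  exact ((shiftEquiv D n).toAdjunction.homEquiv a b).subsingleton_congr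

lemma shift_mem_leftPerp {n : ℤ} {x : D} (hx : x ∈ leftPerp (shiftSet (-n) S)) :
    x⟦n⟧ ∈ leftPerp S :=
  fun s hs => (forall_shift_hom_eq_zero_iff n x s).2 (hx _ ⟨s, hs, ⟨Iso.refl _⟩⟩)

lemma shift_neg_mem_rightPerp {n : ℤ} {y : D} (hy : y ∈ rightPerp (shiftSet n S)) :
    y⟦-n⟧ ∈ rightPerp S :=
  fun s hs => (forall_shift_hom_eq_zero_iff n s y).1 (hy _ ⟨s, hs, ⟨Iso.refl _⟩⟩)

end Preadditive

section ExtClosure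

variable {S : Set C}

lemma extClosure_subset {T : Set C} (hST : S ⊆ T) (hT : ExtClosed T) : extClosure S ⊆ T :=
  fun _ hx => Set.mem_sInter.1 hx T ⟨hST, hT⟩

lemma rightPerp_subset_rightPerp_extClosure : rightPerp S ⊆ rightPerp (extClosure S) := by
  intro y hy t ht
  refine extClosure_subset (T := {t | ∀ f : t ⟶ y, f = 0}) hy ?_ ht
  rintro d ⟨t₁, t₂, f, g, h, hT, h₁, h₂⟩ φ
  obtain ⟨ψ, rfl⟩ := Triangle.yoneda_exact₂ _ hT φ (h₁ _)
  rw [h₂ ψ]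
  exact comp_zero

lemma leftPerp_subset_leftPerp_extClosure : leftPerp S ⊆ leftPerp (extClosure S) := by
  intro x hx t ht
  refine extClosure_subset (T := {t | ∀ f : x ⟶ t, f = 0}) hx ?_ ht
  rintro d ⟨t₁, t₂, f, g, h, hT, h₁, h₂⟩ φ
  obtain ⟨ψ, rfl⟩ := Triangle.coyoneda_exact₂ _ hT φ (h₂ _)
  rw [h₁ ψ]
  exact zero_comp

end ExtClosure

lemma exists_distTriang_of_iso {T : Triangle C} (hT : T ∈ distTriang C) {a b c : C}
    (e₁ : a ≅ T.obj₁) (e₂ : b ≅ T.obj₂) (e₃ : c ≅ T.obj₃) :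
    ∃ (f : a ⟶ b) (g : b ⟶ c) (h : c ⟶ a⟦(1 : ℤ)⟧), Triangle.mk f g h ∈ distTriang C := by
  refine ⟨e₁.hom ≫ T.mor₁ ≫ e₂.inv, e₂.hom ≫ T.mor₂ ≫ e₃.inv,
    e₃.hom ≫ T.mor₃ ≫ e₁.inv⟦(1 : ℤ)⟧',
    isomorphic_distinguished T hT _ (Triangle.isoMk _ _ e₁ e₂ e₃ ?_ ?_ ?_)⟩
  · show (e₁.hom ≫ T.mor₁ ≫ e₂.inv) ≫ e₂.hom = e₁.hom ≫ T.mor₁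
    simp
  · show (e₂.hom ≫ T.mor₂ ≫ e₃.inv) ≫ e₃.hom = e₂.hom ≫ T.mor₂
    simp
  · show (e₃.hom ≫ T.mor₃ ≫ e₁.inv⟦(1 : ℤ)⟧') ≫ e₁.hom⟦(1 : ℤ)⟧' = e₃.hom ≫ T.mor₃
    simp [← Functor.map_comp]

lemma exists_distTriang_shift_neg {s a y : C} {α : s ⟶ a⟦(1 : ℤ)⟧} {β : a⟦(1 : ℤ)⟧ ⟶ y}
    {γ : y ⟶ s⟦(1 : ℤ)⟧} (hT : Triangle.mk α β γ ∈ distTriang C) :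
    ∃ (β' : a ⟶ y⟦(-1 : ℤ)⟧) (α' : y⟦(-1 : ℤ)⟧ ⟶ s) (γ' : s ⟶ a⟦(1 : ℤ)⟧),
      Triangle.mk β' α' γ' ∈ distTriang C :=
  exists_distTriang_of_iso (inv_rot_of_distTriang _ (inv_rot_of_distTriang _ hT))
    (shiftShiftNeg a (1 : ℤ)).symm (Iso.refl _) (Iso.refl _)

lemma exists_distTriang_shift {a y s : C} {β : a ⟶ y⟦(-1 : ℤ)⟧} {α : y⟦(-1 : ℤ)⟧ ⟶ s}
    {γ : s ⟶ a⟦(1 : ℤ)⟧} (hT : Triangle.mk β α γ ∈ distTriang C) :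
    ∃ (α' : s ⟶ a⟦(1 : ℤ)⟧) (β' : a⟦(1 : ℤ)⟧ ⟶ y) (γ' : y ⟶ s⟦(1 : ℤ)⟧),
      Triangle.mk α' β' γ' ∈ distTriang C :=
  exists_distTriang_of_iso (rot_of_distTriang _ (rot_of_distTriang _ hT))
    (Iso.refl _) (Iso.refl _) (shiftNegShift y (1 : ℤ)).symm

section Approximations

variable {S T : Set C}

lemma isMinimalRightApprox_of_distTriang {s a y : C} {α : s ⟶ a} {β : a ⟶ y}
    {γ : y ⟶ s⟦(1 : ℤ)⟧} (hT : Triangle.mk α β γ ∈ distTriang C) (hs : s ∈ T)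
    (hy : y ∈ rightPerp T) (hy' : y⟦(-1 : ℤ)⟧ ∈ rightPerp T) :
    IsMinimalRightApprox T α := by
  refine ⟨⟨hs, fun t ht g => ?_⟩, fun g hg => ?_⟩
  · obtain ⟨h, hh⟩ := Triangle.coyoneda_exact₂ _ hT g (hy t ht _)
    exact ⟨h, hh.symm⟩
  · obtain ⟨u, hu⟩ := Triangle.coyoneda_exact₂ _ (inv_rot_of_distTriang _ hT) (𝟙 s - g)
      (show (𝟙 s - g) ≫ α = 0 by rw [Preadditive.sub_comp, hg, Category.id_comp, sub_self])
    have hg1 : 𝟙 s - g = 0 := by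
      rw [hu, hy' s hs u]
      exact zero_comp
    rw [← sub_eq_zero.1 hg1]
    infer_instance

lemma isMinimalLeftApprox_of_distTriang {x b s : C} {β : x ⟶ b} {α : b ⟶ s}
    {γ : s ⟶ x⟦(1 : ℤ)⟧} (hT : Triangle.mk β α γ ∈ distTriang C) (hs : s ∈ T)
    (hx : x ∈ leftPerp T) (hx' : x⟦(1 : ℤ)⟧ ∈ leftPerp T) :
    IsMinimalLeftApprox T α := by
  refine ⟨⟨hs, fun t ht g => ?_⟩, fun g hg => ?_⟩
  · obtain ⟨h, hh⟩ := Triangle.yoneda_exact₂ _ hT g (hx t ht _)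
    exact ⟨h, hh.symm⟩
  · obtain ⟨u, hu⟩ := Triangle.yoneda_exact₂ _ (rot_of_distTriang _ hT) (𝟙 s - g)
      (show α ≫ (𝟙 s - g) = 0 by rw [Preadditive.comp_sub, hg, Category.comp_id, sub_self])
    have hg1 : 𝟙 s - g = 0 := by
      rw [hu, hx' s hs u]
      exact comp_zero
    rw [← sub_eq_zero.1 hg1]
    infer_instance

lemma IsRightMutation.nonempty_iso {x y y' : C} (h : IsRightMutation S x y)
    (h' : IsRightMutation S x y') : Nonempty (y ≅ y') := by
  obtain ⟨s, α, β, γ, hT, hα⟩ := h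
  obtain ⟨s', α', β', γ', hT', hα'⟩ := h'
  obtain ⟨i, hi, hiα⟩ := hα.exists_isIso_comp_eq hα'
  have e : Arrow.mk α ≅ Arrow.mk α' := Arrow.isoMk (asIso i) (Iso.refl _) (by simp [hiα])
  obtain ⟨e', -, -⟩ := exists_iso_of_arrow_iso _ _ hT hT' e
  exact ⟨Triangle.π₃.mapIso e'⟩

lemma IsLeftMutation.nonempty_iso {y x x' : C} (h : IsLeftMutation S y x)
    (h' : IsLeftMutation S y x') : Nonempty (x ≅ x') := by
  obtain ⟨s, β, α, γ, hT, hα⟩ := h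
  obtain ⟨s', β', α', γ', hT', hα'⟩ := h'
  obtain ⟨i, hi, hiα⟩ := hα.exists_isIso_comp_eq hα'
  have e : Arrow.mk α ≅ Arrow.mk α' := Arrow.isoMk (Iso.refl _) (asIso i) (by simp [hiα])
  obtain ⟨e', -, -⟩ := exists_iso_of_arrow_iso _ _
    (rot_of_distTriang _ hT) (rot_of_distTriang _ hT') e
  exact ⟨(shiftFunctor C (1 : ℤ)).preimageIso (Triangle.π₃.mapIso e')⟩

end Approximations

structure RightMutationTriangle (S Y : Set C) (x : C) where
  s : C
  y : C
  α : s ⟶ x⟦(1 : ℤ)⟧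
  β : x⟦(1 : ℤ)⟧ ⟶ y
  γ : y ⟶ s⟦(1 : ℤ)⟧
  distinguished : Triangle.mk α β γ ∈ distTriang C
  s_mem : s ∈ extClosure S
  y_mem : y ∈ Y

namespace RightMutationTriangle

variable {S Y : Set C} {x x' : C}

lemma exists_β_comp_eq (T : RightMutationTriangle S Y x) {z : C} (φ : x⟦(1 : ℤ)⟧ ⟶ z)
    (hz : z ∈ rightPerp (extClosure S)) : ∃ g : T.y ⟶ z, T.β ≫ g = φ := by
  obtain ⟨g, hg⟩ := Triangle.yoneda_exact₂ _ T.distinguished φ (hz _ T.s_mem _)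
  exact ⟨g, hg.symm⟩

lemma eq_of_β_comp_eq (T : RightMutationTriangle S Y x) {z : C}
    (hz : z⟦(-1 : ℤ)⟧ ∈ rightPerp (extClosure S)) {g g' : T.y ⟶ z}
    (h : T.β ≫ g = T.β ≫ g') : g = g' := by
  obtain ⟨u, hu⟩ := Triangle.yoneda_exact₃ _ T.distinguished (g - g')
    (show T.β ≫ (g - g') = 0 by rw [Preadditive.comp_sub, h, sub_self])
  rw [← sub_eq_zero, hu, (forall_shift_hom_eq_zero_iff 1 T.s z).2 (hz _ T.s_mem) u]
  exact comp_zero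

lemma eq_of_shift_comp_β_eq (T : RightMutationTriangle S Y x')
    (hx : x⟦(1 : ℤ)⟧ ∈ leftPerp (extClosure S)) {f f' : x ⟶ x'}
    (h : f⟦(1 : ℤ)⟧' ≫ T.β = f'⟦(1 : ℤ)⟧' ≫ T.β) : f = f' := by
  obtain ⟨v, hv⟩ := Triangle.coyoneda_exact₂ _ T.distinguished (f⟦(1 : ℤ)⟧' - f'⟦(1 : ℤ)⟧')
    (show (f⟦(1 : ℤ)⟧' - f'⟦(1 : ℤ)⟧') ≫ T.β = 0 by rw [Preadditive.sub_comp, h, sub_self])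
  rw [hx _ T.s_mem v] at hv
  exact (shiftFunctor C (1 : ℤ)).map_injective (sub_eq_zero.1 (hv.trans zero_comp))

lemma exists_shift_comp_β_eq (T : RightMutationTriangle S Y x)
    (T' : RightMutationTriangle S Y x') (hx : x ∈ leftPerp (extClosure S)) (g : T.y ⟶ T'.y) :
    ∃ f : x ⟶ x', T.β ≫ g = f⟦(1 : ℤ)⟧' ≫ T'.β := by
  have hγ : (T.β ≫ g) ≫ T'.γ = 0 := by
    obtain ⟨u, hu⟩ := (shiftFunctor C (1 : ℤ)).map_surjective ((T.β ≫ g) ≫ T'.γ)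
    rw [← hu, hx _ T'.s_mem u, Functor.map_zero]
  obtain ⟨w, hw⟩ := Triangle.coyoneda_exact₃ _ T'.distinguished _ hγ
  obtain ⟨f, rfl⟩ := (shiftFunctor C (1 : ℤ)).map_surjective w
  exact ⟨f, hw⟩

end RightMutationTriangle

namespace IsMutationPair

variable {S X Y : Set C}

lemma mem_X_of_iso (hXY : IsMutationPair S X Y) {x x' : C} (e : x' ≅ x) (hx : x ∈ X) :
    x' ∈ X := by
  rw [hXY.1] at hx ⊢
  obtain ⟨⟨⟨h₁, h₂⟩, h₃⟩, h₄⟩ := hx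
  exact ⟨⟨⟨mem_leftPerp_of_iso e h₁, mem_rightPerp_of_iso e h₂⟩, mem_leftPerp_of_iso e h₃⟩,
    mem_shiftSet_of_iso e h₄⟩

lemma mem_Y_of_iso (hXY : IsMutationPair S X Y) {y y' : C} (e : y' ≅ y) (hy : y ∈ Y) :
    y' ∈ Y := by
  rw [hXY.2] at hy ⊢
  obtain ⟨⟨⟨h₁, h₂⟩, h₃⟩, h₄⟩ := hy
  exact ⟨⟨⟨mem_leftPerp_of_iso e h₁, mem_rightPerp_of_iso e h₂⟩, mem_rightPerp_of_iso e h₃⟩,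
    mem_shiftSet_of_iso e h₄⟩

lemma mem_leftPerp_of_mem_X (hXY : IsMutationPair S X Y) {x : C} (hx : x ∈ X) :
    x ∈ leftPerp (extClosure S) := by
  rw [hXY.1] at hx
  exact leftPerp_subset_leftPerp_extClosure hx.1.1.1

lemma shift_mem_leftPerp_of_mem_X (hXY : IsMutationPair S X Y) {x : C} (hx : x ∈ X) :
    x⟦(1 : ℤ)⟧ ∈ leftPerp (extClosure S) := by
  rw [hXY.1] at hx
  exact leftPerp_subset_leftPerp_extClosure (shift_mem_leftPerp hx.1.2)

lemma mem_rightPerp_of_mem_Y (hXY : IsMutationPair S X Y) {y : C} (hy : y ∈ Y) :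
    y ∈ rightPerp (extClosure S) := by
  rw [hXY.2] at hy
  exact rightPerp_subset_rightPerp_extClosure hy.1.1.2

lemma shift_neg_mem_rightPerp_of_mem_Y (hXY : IsMutationPair S X Y) {y : C} (hy : y ∈ Y) :
    y⟦(-1 : ℤ)⟧ ∈ rightPerp (extClosure S) := by
  rw [hXY.2] at hy
  exact rightPerp_subset_rightPerp_extClosure (shift_neg_mem_rightPerp hy.1.2)

lemma nonempty_rightMutationTriangle (hXY : IsMutationPair S X Y) {x : C} (hx : x ∈ X) :
    Nonempty (RightMutationTriangle S Y x) := by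
  rw [hXY.1] at hx
  obtain ⟨d, ⟨s, y, f, g, h, hT, hs, hy⟩, ⟨e⟩⟩ := hx.2
  obtain ⟨α, β, γ, hT'⟩ := exists_distTriang_of_iso hT (Iso.refl s)
    ((shiftFunctor C (1 : ℤ)).mapIso e ≪≫ shiftNegShift d (1 : ℤ)) (Iso.refl y)
  exact ⟨⟨s, y, α, β, γ, hT', hs, hy⟩⟩

lemma exists_distTriang_of_mem_Y (hXY : IsMutationPair S X Y) {y : C} (hy : y ∈ Y) :
    ∃ (x s : C) (β : x ⟶ y⟦(-1 : ℤ)⟧) (α : y⟦(-1 : ℤ)⟧ ⟶ s) (γ : s ⟶ x⟦(1 : ℤ)⟧),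
      Triangle.mk β α γ ∈ distTriang C ∧ x ∈ X ∧ s ∈ extClosure S := by
  rw [hXY.2] at hy
  obtain ⟨d, ⟨x, s, f, g, h, hT, hx, hs⟩, ⟨e⟩⟩ := hy.2
  obtain ⟨β, α, γ, hT'⟩ := exists_distTriang_of_iso hT (Iso.refl x)
    ((shiftFunctor C (-1 : ℤ)).mapIso e ≪≫ shiftShiftNeg d (1 : ℤ)) (Iso.refl s)
  exact ⟨x, s, β, α, γ, hT', hx, hs⟩

lemma isRightMutation (hXY : IsMutationPair S X Y) {x : C} (T : RightMutationTriangle S Y x) :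
    IsRightMutation S x T.y :=
  ⟨T.s, T.α, T.β, T.γ, T.distinguished, isMinimalRightApprox_of_distTriang T.distinguished
    T.s_mem (hXY.mem_rightPerp_of_mem_Y T.y_mem) (hXY.shift_neg_mem_rightPerp_of_mem_Y T.y_mem)⟩

lemma exists_isRightMutation_of_mem_X (hXY : IsMutationPair S X Y) {x : C} (hx : x ∈ X) :
    ∃ y ∈ Y, IsRightMutation S x y := by
  obtain ⟨T⟩ := hXY.nonempty_rightMutationTriangle hx
  exact ⟨T.y, T.y_mem, hXY.isRightMutation T⟩

lemma exists_isRightMutation_of_mem_Y (hXY : IsMutationPair S X Y) {y : C} (hy : y ∈ Y) :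
    ∃ x ∈ X, IsRightMutation S x y := by
  obtain ⟨x, s, β, α, γ, hT, hx, hs⟩ := hXY.exists_distTriang_of_mem_Y hy
  obtain ⟨α', β', γ', hT'⟩ := exists_distTriang_shift hT
  exact ⟨x, hx, s, α', β', γ', hT', isMinimalRightApprox_of_distTriang hT' hs
    (hXY.mem_rightPerp_of_mem_Y hy) (hXY.shift_neg_mem_rightPerp_of_mem_Y hy)⟩

lemma exists_isLeftMutation_of_mem_Y (hXY : IsMutationPair S X Y) {y : C} (hy : y ∈ Y) :
    ∃ x ∈ X, IsLeftMutation S y x := by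
  obtain ⟨x, s, β, α, γ, hT, hx, hs⟩ := hXY.exists_distTriang_of_mem_Y hy
  exact ⟨x, hx, s, β, α, γ, hT, isMinimalLeftApprox_of_distTriang hT hs
    (hXY.mem_leftPerp_of_mem_X hx) (hXY.shift_mem_leftPerp_of_mem_X hx)⟩

lemma exists_isLeftMutation_of_mem_X (hXY : IsMutationPair S X Y) {x : C} (hx : x ∈ X) :
    ∃ y ∈ Y, IsLeftMutation S y x := by
  obtain ⟨T⟩ := hXY.nonempty_rightMutationTriangle hx
  obtain ⟨β, α, γ, hT⟩ := exists_distTriang_shift_neg T.distinguished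
  exact ⟨T.y, T.y_mem, T.s, β, α, γ, hT, isMinimalLeftApprox_of_distTriang hT T.s_mem
    (hXY.mem_leftPerp_of_mem_X hx) (hXY.shift_mem_leftPerp_of_mem_X hx)⟩

lemma eq_setOf_isRightMutation (hXY : IsMutationPair S X Y) :
    Y = {y | ∃ x ∈ X, IsRightMutation S x y} := by
  ext y
  refine ⟨hXY.exists_isRightMutation_of_mem_Y, ?_⟩
  rintro ⟨x, hx, hxy⟩
  obtain ⟨y', hy', hxy'⟩ := hXY.exists_isRightMutation_of_mem_X hx
  obtain ⟨e⟩ := hxy.nonempty_iso hxy'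
  exact hXY.mem_Y_of_iso e hy'

lemma eq_setOf_isLeftMutation (hXY : IsMutationPair S X Y) :
    X = {x | ∃ y ∈ Y, IsLeftMutation S y x} := by
  ext x
  refine ⟨hXY.exists_isLeftMutation_of_mem_X, ?_⟩
  rintro ⟨y, hy, hyx⟩
  obtain ⟨x', hx', hyx'⟩ := hXY.exists_isLeftMutation_of_mem_Y hy
  obtain ⟨e⟩ := hyx.nonempty_iso hyx'
  exact hXY.mem_X_of_iso e hx'

noncomputable def mutationTriangle (hXY : IsMutationPair S X Y)
    (x : ObjectProperty.FullSubcategory (· ∈ X)) : RightMutationTriangle S Y x.obj :=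
  (hXY.nonempty_rightMutationTriangle x.property).some

noncomputable def mutationMap (hXY : IsMutationPair S X Y)
    {x x' : ObjectProperty.FullSubcategory (· ∈ X)} (f : x.obj ⟶ x'.obj) :
    (hXY.mutationTriangle x).y ⟶ (hXY.mutationTriangle x').y :=
  ((hXY.mutationTriangle x).exists_β_comp_eq (f⟦(1 : ℤ)⟧' ≫ (hXY.mutationTriangle x').β)
    (hXY.mem_rightPerp_of_mem_Y (hXY.mutationTriangle x').y_mem)).choose

lemma β_comp_mutationMap (hXY : IsMutationPair S X Y)
    {x x' : ObjectProperty.FullSubcategory (· ∈ X)} (f : x.obj ⟶ x'.obj) :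
    (hXY.mutationTriangle x).β ≫ hXY.mutationMap f =
      f⟦(1 : ℤ)⟧' ≫ (hXY.mutationTriangle x').β :=
  ((hXY.mutationTriangle x).exists_β_comp_eq (f⟦(1 : ℤ)⟧' ≫ (hXY.mutationTriangle x').β)
    (hXY.mem_rightPerp_of_mem_Y (hXY.mutationTriangle x').y_mem)).choose_spec

lemma mutationTriangle_hom_ext (hXY : IsMutationPair S X Y)
    {x x' : ObjectProperty.FullSubcategory (· ∈ X)}
    {g g' : (hXY.mutationTriangle x).y ⟶ (hXY.mutationTriangle x').y}
    (h : (hXY.mutationTriangle x).β ≫ g = (hXY.mutationTriangle x).β ≫ g') : g = g' :=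
  (hXY.mutationTriangle x).eq_of_β_comp_eq
    (hXY.shift_neg_mem_rightPerp_of_mem_Y (hXY.mutationTriangle x').y_mem) h

noncomputable def mutationFunctor (hXY : IsMutationPair S X Y) :
    ObjectProperty.FullSubcategory (· ∈ X) ⥤ ObjectProperty.FullSubcategory (· ∈ Y) where
  obj x := ⟨(hXY.mutationTriangle x).y, (hXY.mutationTriangle x).y_mem⟩
  map f := ObjectProperty.homMk (hXY.mutationMap f.hom)
  map_id x := ObjectProperty.hom_ext _
    (hXY.mutationTriangle_hom_ext (by simp [β_comp_mutationMap]))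
  map_comp f g := ObjectProperty.hom_ext _ (hXY.mutationTriangle_hom_ext
    (by simp [β_comp_mutationMap, reassoc_of% (hXY.β_comp_mutationMap f.hom)]))

instance (hXY : IsMutationPair S X Y) : hXY.mutationFunctor.Faithful where
  map_injective {x x'} f f' h := ObjectProperty.hom_ext _
    ((hXY.mutationTriangle x').eq_of_shift_comp_β_eq
      (hXY.shift_mem_leftPerp_of_mem_X x.property)
      (by rw [← β_comp_mutationMap, ← β_comp_mutationMap]
          exact congrArg (fun m => _ ≫ m.hom) h))

instance (hXY : IsMutationPair S X Y) : hXY.mutationFunctor.Full where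
  map_surjective {x x'} g := by
    obtain ⟨f, hf⟩ := (hXY.mutationTriangle x).exists_shift_comp_β_eq
      (hXY.mutationTriangle x') (hXY.mem_leftPerp_of_mem_X x.property) g.hom
    exact ⟨ObjectProperty.homMk f, ObjectProperty.hom_ext _
      (hXY.mutationTriangle_hom_ext ((hXY.β_comp_mutationMap f).trans hf.symm))⟩

instance (hXY : IsMutationPair S X Y) : hXY.mutationFunctor.EssSurj where
  mem_essImage y := by
    obtain ⟨x, hx, hxy⟩ := hXY.exists_isRightMutation_of_mem_Y y.property
    obtain ⟨e⟩ := (hXY.isRightMutation (hXY.mutationTriangle ⟨x, hx⟩)).nonempty_iso hxy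
    exact ⟨⟨x, hx⟩, ⟨ObjectProperty.isoMk _ e⟩⟩

instance (hXY : IsMutationPair S X Y) : hXY.mutationFunctor.IsEquivalence where

end IsMutationPair

theorem stmt14_general (S : Set C)
    (X Y : Set C) (hXY : IsMutationPair S X Y) :
    Y = {y | ∃ x ∈ X, IsRightMutation S x y} ∧
    X = {x | ∃ y ∈ Y, IsLeftMutation S y x} ∧
    Nonempty (ObjectProperty.FullSubcategory (· ∈ X) ≌ ObjectProperty.FullSubcategory (· ∈ Y)) :=
  ⟨hXY.eq_setOf_isRightMutation, hXY.eq_setOf_isLeftMutation,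
    ⟨hXY.mutationFunctor.asEquivalence⟩⟩

/-- For an `S`-mutation pair `(X, Y)` (with `S` orthogonal, `⟨S⟩` functorially finite,
and `S` an `𝕊₋₁`-subcategory or `Hom(ΣS, S) = 0`): `Y = R(X)`, `X = L(Y)`, and there is
an equivalence of categories `X ≃ Y`. -/
theorem stmt14 (S : Set C) (hS : IsOrthogonalCollection k S)
    (hff : FunctoriallyFinite (extClosure S))
    (hcond : (∃ SD : SerreData k C, IsSwSubcat k SD (-1) S) ∨
      (∀ x ∈ S, ∀ y ∈ S, ∀ f : x⟦(1 : ℤ)⟧ ⟶ y, f = 0))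
    (X Y : Set C) (hXY : IsMutationPair S X Y) :
    Y = {y | ∃ x ∈ X, IsRightMutation S x y} ∧
    X = {x | ∃ y ∈ Y, IsLeftMutation S y x} ∧
    Nonempty (ObjectProperty.FullSubcategory (· ∈ X) ≌ ObjectProperty.FullSubcategory (· ∈ Y)) :=
  stmt14_general S X Y hXY

end SMSPaper
end

section
/- Let w ≥ 1, let D have Serre functor 𝕊, and let S be a w-orthogonal collection that is an 𝕊_{-w}-subcategory with ⟨S⟩ functorially finite. Set Z = S^{⊥_w} = {d : Hom(Σ^i S, d) = 0 for 0 ≤ i ≤ w}. Then Z = S^{⊥_w} = {}^{⊥_w}S (i.e., also Hom(d, Σ^{-i}S) = 0 for 0 ≤ i ≤ w for all d ∈ Z), and Z is itself an 𝕊_{-w}-subcategory. -/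
open CategoryTheory CategoryTheory.Limits CategoryTheory.Pretriangulated

universe v u u₂

namespace SMSPaper

variable {C : Type u} [Category.{v} C] [Preadditive C] [HasZeroObject C]
  [HasShift C ℤ] [∀ n : ℤ, (shiftFunctor C n).Additive] [Pretriangulated C]

variable (k : Type u₂) [Field k] [Linear k C]

/-!
For `i + j = w`, Serre duality together with the shift equivalence turns `Hom(Σʲ s, d) = 0` into
`Hom(d, Σ⁻ⁱ 𝕊Σʷ s) = 0`. As `S` is stable under `𝕊_{-w} = 𝕊Σʷ`, letting `s` run through `S` and
`j` through `0, …, w` identifies `S^{⊥_w}` with `{}^{⊥_w}S`. The same duality, applied to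
`x ≅ 𝕊Σʷ z`, shows that `x ∈ S^{⊥_w}` if and only if `z ∈ {}^{⊥_w}S`; since `𝕊Σʷ` is
essentially surjective, `Z` is an `𝕊_{-w}`-subcategory.
-/

theorem forall_le_iff_of_add_eq {w : ℕ} {P Q : ℕ → Prop}
    (h : ∀ i j, i + j = w → (P i ↔ Q j)) : (∀ i ≤ w, P i) ↔ ∀ j ≤ w, Q j :=
  ⟨fun hP j hj => (h (w - j) j (by omega)).1 (hP _ (Nat.sub_le w j)),
    fun hQ i hi => (h i (w - i) (by omega)).2 (hQ _ (Nat.sub_le w i))⟩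

section Duality

variable {D : Type*} [Category D]

theorem subsingleton_shift_hom_iff [HasShift D ℤ] (a b : D) (n : ℤ) :
    Subsingleton (a⟦n⟧ ⟶ b) ↔ Subsingleton (a ⟶ b⟦-n⟧) :=
  ((shiftEquiv D n).toAdjunction.homEquiv a b).subsingleton_congr

theorem subsingleton_hom_iff_forall_eq_zero [HasZeroMorphisms D] {a b : D} :
    Subsingleton (a ⟶ b) ↔ ∀ f : a ⟶ b, f = 0 :=
  subsingleton_iff_forall_eq 0

variable [Preadditive D] {𝕜 : Type*} [Field 𝕜] [Linear 𝕜 D]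

theorem SerreData.subsingleton_hom_iff (SD : SerreData 𝕜 D) (a b : D) :
    Subsingleton (a ⟶ b) ↔ Subsingleton (b ⟶ SD.F.obj a) := by
  simp only [subsingleton_hom_iff_forall_eq_zero]
  exact ⟨fun h g => SD.nondeg₂ g fun f => by rw [h f, zero_comp, map_zero],
    fun h f => SD.nondeg₁ f fun g => by rw [h g, comp_zero, map_zero]⟩

variable [HasShift D ℤ]

theorem SerreData.subsingleton_hom_shift_iff (SD : SerreData 𝕜 D) {i j n : ℤ} (h : i + j = n)
    (a b : D) : Subsingleton (b ⟶ a⟦-j⟧) ↔ Subsingleton (a⟦i⟧ ⟶ SD.F.obj (b⟦n⟧)) :=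
  calc Subsingleton (b ⟶ a⟦-j⟧)
      ↔ Subsingleton (b ⟶ a⟦i⟧⟦-n⟧) :=
        (Iso.homCongr (Iso.refl b) ((shiftFunctorAdd' D i (-n) (-j) (by omega)).app a))
          |>.subsingleton_congr
    _ ↔ Subsingleton (b⟦n⟧ ⟶ a⟦i⟧) := (subsingleton_shift_hom_iff b _ n).symm
    _ ↔ Subsingleton (a⟦i⟧ ⟶ SD.F.obj (b⟦n⟧)) := SD.subsingleton_hom_iff _ _

theorem SerreData.subsingleton_shift_hom_iff_hom_shift (SD : SerreData 𝕜 D) {i j n : ℤ}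
    (h : i + j = n) (a d : D) :
    Subsingleton (a⟦j⟧ ⟶ d) ↔ Subsingleton (d ⟶ (SD.F.obj (a⟦n⟧))⟦-i⟧) :=
  (subsingleton_shift_hom_iff a d j).trans <|
    (SD.subsingleton_hom_shift_iff h d a).trans (subsingleton_shift_hom_iff d _ i)

theorem SerreData.exists_iso_obj_shift (SD : SerreData 𝕜 D) (x : D) (n : ℤ) :
    ∃ z : D, Nonempty (x ≅ SD.F.obj (z⟦n⟧)) := by
  have := SD.isEquiv
  exact ⟨(SD.F.objPreimage x)⟦-n⟧,
    ⟨(SD.F.mapIso (shiftNegShift _ n) ≪≫ SD.F.objObjPreimageIso x).symm⟩⟩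

theorem IsSwSubcat.forall_mem_iff {SD : SerreData 𝕜 D} {m : ℤ} {S : Set D}
    (hS : IsSwSubcat 𝕜 SD m S) {P : D → Prop} (hP : ∀ {x y : D}, (x ≅ y) → P y → P x) :
    (∀ s ∈ S, P s) ↔ ∀ s ∈ S, P (SD.F.obj (s⟦-m⟧)) :=
  ⟨fun h s hs => h _ ((hS _).2 ⟨s, hs, ⟨Iso.refl _⟩⟩), fun h s hs => by
    obtain ⟨s', hs', ⟨e⟩⟩ := (hS s).1 hs
    exact hP e (h s' hs')⟩

theorem mem_perpW_iff {w : ℕ} {S : Set D} {d : D} :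
    d ∈ perpW w S ↔ ∀ i ≤ w, ∀ s ∈ S, Subsingleton (s⟦(i : ℤ)⟧ ⟶ d) := by
  simp only [perpW, Set.mem_ofPred_eq, subsingleton_hom_iff_forall_eq_zero]

theorem mem_wPerp_iff {w : ℕ} {S : Set D} {d : D} :
    d ∈ wPerp w S ↔ ∀ i ≤ w, ∀ s ∈ S, Subsingleton (d ⟶ s⟦-(i : ℤ)⟧) := by
  simp only [wPerp, Set.mem_ofPred_eq, subsingleton_hom_iff_forall_eq_zero]

theorem perpW_eq_wPerp {SD : SerreData 𝕜 D} {w : ℕ} {S : Set D}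
    (hS : IsSwSubcat 𝕜 SD (-(w : ℤ)) S) : perpW w S = wPerp w S := by
  ext d
  calc d ∈ perpW w S ↔ ∀ j ≤ w, ∀ s ∈ S, Subsingleton (s⟦(j : ℤ)⟧ ⟶ d) := mem_perpW_iff
    _ ↔ ∀ i ≤ w, ∀ s ∈ S, Subsingleton (d ⟶ (SD.F.obj (s⟦-(-(w : ℤ))⟧))⟦-(i : ℤ)⟧) :=
        forall_le_iff_of_add_eq fun j i h =>
          forall₂_congr fun s _ => SD.subsingleton_shift_hom_iff_hom_shift (by omega) s d
    _ ↔ ∀ i ≤ w, ∀ s ∈ S, Subsingleton (d ⟶ s⟦-(i : ℤ)⟧) :=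
        forall₂_congr fun i _ => (hS.forall_mem_iff fun e =>
          ((Iso.refl d).homCongr ((shiftFunctor D _).mapIso e)).subsingleton_congr.2).symm
    _ ↔ d ∈ wPerp w S := mem_wPerp_iff.symm

theorem SerreData.mem_perpW_iff_mem_wPerp_of_iso (SD : SerreData 𝕜 D) {w : ℕ} {S : Set D}
    {x z : D} (e : x ≅ SD.F.obj (z⟦(w : ℤ)⟧)) : x ∈ perpW w S ↔ z ∈ wPerp w S := by
  rw [mem_perpW_iff, mem_wPerp_iff]
  exact forall_le_iff_of_add_eq fun i j h => forall₂_congr fun s _ =>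
    ((Iso.refl _).homCongr e).subsingleton_congr.trans
      (SD.subsingleton_hom_shift_iff (by omega) s z).symm

end Duality

theorem stmt15 (SD : SerreData k C) (w : ℕ)
    (S : Set C) (hsw : IsSwSubcat k SD (-(w : ℤ)) S) :
    perpW w S = wPerp w S ∧ IsSwSubcat k SD (-(w : ℤ)) (perpW w S) := by
  have hZ : perpW w S = wPerp w S := perpW_eq_wPerp hsw
  refine ⟨hZ, fun x => ?_⟩
  rw [neg_neg]
  constructor
  · intro hx
    obtain ⟨z, ⟨e⟩⟩ := SD.exists_iso_obj_shift x w
    exact ⟨z, hZ ▸ (SD.mem_perpW_iff_mem_wPerp_of_iso e).1 hx, ⟨e⟩⟩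
  · rintro ⟨z, hz, ⟨e⟩⟩
    exact (SD.mem_perpW_iff_mem_wPerp_of_iso e).2 (hZ ▸ hz)

end SMSPaper
end
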